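/- Fix m ∈ ℕ, let λ ∈ ℂ, and let u : [0,∞) → ℂ^m be a measurable function such that s ↦ e^{−Re(λ) s} ‖u(s)‖ is integrable on [0,∞). For t ≥ 0 define (Φ_t u)(x) = u(x+t−1) if x + t ≥ 1 and (Φ_t u)(x) = 0 otherwise, for x ∈ [0,1]. Then for every x ∈ [0,1], ∫_0^∞ e^{−λ t} (Φ_t u)(x) dt = e^{λ(x−1)} ∫_0^∞ e^{−λ s} u(s) ds. -/
import Mathlib


open MeasureTheory

/-- The control maps of the boundary control system on `L^p([0,1],ℂ^m)`:
`(Φ_t u)(x) = u(x+t-1)` if `x + t ≥ 1`, and `0` otherwise. -/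
noncomputable def PhiT (m : ℕ) (t : ℝ) (u : ℝ → Fin m → ℂ) : ℝ → Fin m → ℂ :=
  fun x => if 1 ≤ x + t then u (x + t - 1) else 0

/-- Laplace transform of the control maps: if `u : [0,∞) → ℂ^m` is measurable with
`s ↦ e^{-Re(λ)s}‖u(s)‖` integrable, then for every `x ∈ [0,1]`,
`∫_0^∞ e^{-λt} (Φ_t u)(x) dt = e^{λ(x-1)} ∫_0^∞ e^{-λs} u(s) ds`. -/
theorem stmt13 (m : ℕ) (lam : ℂ) (u : ℝ → Fin m → ℂ) (hu : Measurable u)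
    (hint : IntegrableOn (fun s : ℝ => Real.exp (-lam.re * s) * ‖u s‖) (Set.Ici 0)) :
    ∀ x ∈ Set.Icc (0:ℝ) 1,
      (∫ t in Set.Ici (0:ℝ), Complex.exp (-(lam * (t : ℂ))) • PhiT m t u x) =
        Complex.exp (lam * ((x : ℂ) - 1)) •
          ∫ s in Set.Ici (0:ℝ), Complex.exp (-(lam * (s : ℂ))) • u s := by
  intro x hx
  have hx1 : (0:ℝ) ≤ 1 - x := by linarith [hx.2]
  set G : ℝ → Fin m → ℂ := fun t => Complex.exp (-(lam * (t : ℂ))) • u (x + t - 1) with hG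
  have h1 : ∀ t : ℝ, Complex.exp (-(lam * (t : ℂ))) • PhiT m t u x
      = (Set.Ici (1 - x)).indicator G t := by
    intro t
    simp only [PhiT, Set.indicator, Set.mem_Ici, hG]
    by_cases h : 1 ≤ x + t
    · rw [if_pos h, if_pos (by linarith)]
    · rw [if_neg h, if_neg (by intro h'; exact h (by linarith)), smul_zero]
  calc (∫ t in Set.Ici (0:ℝ), Complex.exp (-(lam * (t : ℂ))) • PhiT m t u x)
      = ∫ t in Set.Ici (0:ℝ), (Set.Ici (1 - x)).indicator G t := by
        exact integral_congr_ae (Filter.Eventually.of_forall fun t => h1 t)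
    _ = ∫ t in Set.Ici (1 - x), G t := by
        rw [setIntegral_indicator measurableSet_Ici, Set.Ici_inter_Ici,
          max_eq_right hx1]
    _ = ∫ s in Set.Ici (0:ℝ), G (s + (1 - x)) := by
        rw [← integral_indicator measurableSet_Ici, ← integral_indicator measurableSet_Ici,
          ← integral_add_right_eq_self (fun t => (Set.Ici (1 - x)).indicator G t) (1 - x)]
        congr 1
        funext s
        simp only [Set.indicator, Set.mem_Ici]
        by_cases h : (0:ℝ) ≤ s
        · rw [if_pos h, if_pos (by linarith)]
        · rw [if_neg h, if_neg (by intro h'; exact h (by linarith))]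
    _ = ∫ s in Set.Ici (0:ℝ),
          Complex.exp (lam * ((x : ℂ) - 1)) • (Complex.exp (-(lam * (s : ℂ))) • u s) := by
        apply integral_congr_ae
        apply Filter.Eventually.of_forall
        intro s
        simp only [hG]
        have harg : x + (s + (1 - x)) - 1 = s := by ring
        rw [harg, smul_smul, ← Complex.exp_add]
        congr 2
        push_cast
        ring
    _ = Complex.exp (lam * ((x : ℂ) - 1)) •
          ∫ s in Set.Ici (0:ℝ), Complex.exp (-(lam * (s : ℂ))) • u s := integral_smul _ _
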